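/- Let η, η' be probability measures on ℝ with finite first moment. Then W₁(η,η') = ∫_{(0,1)} |F_η^{-1}(u) − F_{η'}^{-1}(u)| du ≥ |∫_ℝ x η(dx) − ∫_ℝ x η'(dx)|, and the inequality is an equality if and only if η ≤_st η' or η' ≤_st η (i.e. η and η' are comparable in the stochastic order). -/

import Mathlib

open MeasureTheory ProbabilityTheory Set Filter

noncomputable section

/-- Lebesgue measure restricted to `(0,1)`. -/
def lam01 : Measure ℝ := volume.restrict (Set.Ioo 0 1)

/-- Cumulative distribution function `F_η(x) = η((-∞, x])`. -/
def Fcdf (η : Measure ℝ) (x : ℝ) : ℝ := (η (Set.Iic x)).toReal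

/-- Left limit of the cumulative distribution function, `F_η(x-) = η((-∞, x))`. -/
def FcdfL (η : Measure ℝ) (x : ℝ) : ℝ := (η (Set.Iio x)).toReal

/-- Quantile function `F_η^{-1}(u) = inf {x : F_η(x) ≥ u}`. -/
def qf (η : Measure ℝ) (u : ℝ) : ℝ := sInf {x | u ≤ Fcdf η x}

/-- `π` is a coupling between `μ` and `ν`. -/
def IsCoupling (π : Measure (ℝ × ℝ)) (μ ν : Measure ℝ) : Prop :=
  π.map Prod.fst = μ ∧ π.map Prod.snd = ν

/-- `W_ρ^ρ(η, η')`, the Wasserstein distance of order `ρ` raised to the power `ρ`. -/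
def Wr (ρ : ℝ) (η η' : Measure ℝ) : ℝ :=
  sInf {c | ∃ π : Measure (ℝ × ℝ), IsCoupling π η η' ∧ c = ∫ p, |p.1 - p.2| ^ ρ ∂π}

/-- The Wasserstein distance of order `ρ`. -/
def W (ρ : ℝ) (η η' : Measure ℝ) : ℝ := Wr ρ η η' ^ (1 / ρ)

/-- The stochastic order `η ≤_st η'`: the quantile functions are ordered on `(0,1)`. -/
def StochOrder (η η' : Measure ℝ) : Prop := ∀ u ∈ Set.Ioo (0 : ℝ) 1, qf η u ≤ qf η' u

/-- The convex order `μ ≤_cx ν`: `∫ f dμ ≤ ∫ f dν` for every (integrable) convex `f`. -/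
def ConvexOrder (μ ν : Measure ℝ) : Prop :=
  ∀ f : ℝ → ℝ, ConvexOn ℝ Set.univ f → Integrable f μ → Integrable f ν →
    ∫ x, f x ∂μ ≤ ∫ x, f x ∂ν

/-- `AW_ρ^ρ(π, π')`, the adapted Wasserstein distance of order `ρ` raised to the power `ρ`:
the infimum over couplings `χ` between the first marginals of
`∫ (|x-x'|^ρ + W_ρ^ρ(π_x, π'_{x'})) dχ`, where `κ, κ'` are disintegration kernels of `π, π'`. -/
def AWr (ρ : ℝ) (π π' : Measure (ℝ × ℝ)) : ℝ :=
  sInf {c | ∃ (χ : Measure (ℝ × ℝ)) (κ κ' : Kernel ℝ ℝ),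
      IsCoupling χ (π.map Prod.fst) (π'.map Prod.fst) ∧
      π = (π.map Prod.fst).compProd κ ∧ π' = (π'.map Prod.fst).compProd κ' ∧
      c = ∫ q, (|q.1 - q.2| ^ ρ + Wr ρ (κ q.1) (κ' q.2)) ∂χ}

/-- The adapted Wasserstein distance of order `ρ`. -/
def AW (ρ : ℝ) (π π' : Measure (ℝ × ℝ)) : ℝ := AWr ρ π π' ^ (1 / ρ)

/-- The lifted adapted Wasserstein distance of order `ρ`, raised to the power `ρ`, between the
lifted couplings with first marginals `μ, μ'` and kernels `p, p'`. -/
def lAWr (ρ : ℝ) (μ : Measure ℝ) (p : ℝ → Measure ℝ) (μ' : Measure ℝ)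
    (p' : ℝ → Measure ℝ) : ℝ :=
  sInf {c | ∃ χ : Measure (ℝ × ℝ), IsCoupling χ lam01 lam01 ∧
      c = ∫ q, (|q.1 - q.2| ^ ρ + |qf μ q.1 - qf μ' q.2| ^ ρ + Wr ρ (p q.1) (p' q.2)) ∂χ}

/-- The probability kernel `p` encodes a lifted coupling
`λ_{(0,1)}(du) δ_{F_μ^{-1}(u)}(dx) p_u(dy)` between `μ` and `ν`. -/
def IsLiftedCoupling (μ ν : Measure ℝ) (p : ℝ → Measure ℝ) : Prop :=
  Measurable p ∧ (∀ u, IsProbabilityMeasure (p u)) ∧ lam01.bind p = ν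

/-- The probability kernel `m` encodes a lifted martingale coupling between `μ` and `ν`. -/
def IsLiftedMartingale (μ ν : Measure ℝ) (m : ℝ → Measure ℝ) : Prop :=
  IsLiftedCoupling μ ν m ∧ ∀ᵐ u ∂lam01, (∫ y, y ∂(m u)) = qf μ u

end
/-! Writing `|x - y| = ∫ (1{x ≤ t < y} + 1{y ≤ t < x}) dt` and integrating against a coupling `π`
of `η, η'` shows that its cost dominates `∫ |F_η(t) - F_η'(t)| dt`, with equality for the quantile
coupling `(F_η⁻¹, F_η'⁻¹)_# λ_{(0,1)}`, because `F_η⁻¹(u) ≤ t ↔ u ≤ F_η(t)`. The cost of that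
coupling is `∫ |F_η⁻¹ - F_η'⁻¹|`, and the difference of means is `∫ (F_η⁻¹ - F_η'⁻¹)`, so the
inequality is `|∫ f| ≤ ∫ |f|`, with equality iff `f` has an a.e. constant sign. An a.e. ordering of
quantile functions holds everywhere on `(0,1)`: if `F_η⁻¹(u) > F_η'⁻¹(u) = s`, the same strict
ordering holds on the whole interval `(F_η(s), u]`. -/

open scoped ENNReal Topology

section Quantile

lemma Fcdf_nonneg {η : Measure ℝ} (x : ℝ) : 0 ≤ Fcdf η x := ENNReal.toReal_nonneg

variable {η : Measure ℝ} [IsProbabilityMeasure η]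

lemma Fcdf_eq_cdf : Fcdf η = cdf η := by
  ext x
  rw [Fcdf, cdf_eq_real, measureReal_def]

lemma Fcdf_le_one (x : ℝ) : Fcdf η x ≤ 1 := by
  rw [Fcdf_eq_cdf]
  exact cdf_le_one η x

lemma ofReal_Fcdf (x : ℝ) : ENNReal.ofReal (Fcdf η x) = η (Iic x) := by
  rw [Fcdf_eq_cdf, ofReal_cdf]

lemma qf_le_iff_le_Fcdf {u : ℝ} (hu : u ∈ Ioo (0 : ℝ) 1) (t : ℝ) :
    qf η u ≤ t ↔ u ≤ Fcdf η t := by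
  simp only [qf, Fcdf_eq_cdf]
  have hne : {x | u ≤ cdf η x}.Nonempty :=
    ((tendsto_cdf_atTop η).eventually_const_lt hu.2).exists.imp fun _ => le_of_lt
  have hbdd : BddBelow {x | u ≤ cdf η x} := by
    obtain ⟨x₀, hx₀⟩ := ((tendsto_cdf_atBot η).eventually_lt_const hu.1).exists
    exact ⟨x₀, fun x hx => le_of_not_gt fun hlt => (hx.trans (monotone_cdf η hlt.le)).not_gt hx₀⟩
  refine ⟨fun h => ?_, fun h => csInf_le hbdd h⟩
  -- right continuity of the cdf: `u ≤ cdf η x` for every `x > t`, hence at `t`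
  have hlim : Tendsto (cdf η) (𝓝[>] t) (𝓝 (cdf η t)) :=
    ((cdf η).right_continuous t).mono Ioi_subset_Ici_self
  refine ge_of_tendsto hlim ?_
  filter_upwards [self_mem_nhdsWithin] with x hx
  obtain ⟨y, hy, hyx⟩ := exists_lt_of_csInf_lt hne (h.trans_lt hx)
  exact hy.trans (monotone_cdf η hyx.le)

lemma le_Fcdf_qf {u : ℝ} (hu : u ∈ Ioo (0 : ℝ) 1) : u ≤ Fcdf η (qf η u) :=
  (qf_le_iff_le_Fcdf hu _).1 le_rfl

lemma monotoneOn_qf : MonotoneOn (qf η) (Ioo 0 1) := fun _ hu _ hv huv =>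
  (qf_le_iff_le_Fcdf hu _).2 (huv.trans (le_Fcdf_qf hv))

end Quantile

section UnitInterval

instance : IsProbabilityMeasure lam01 :=
  ⟨by simp [lam01]⟩

lemma lam01_congr {s s' : Set ℝ} (h : ∀ u ∈ Ioo (0 : ℝ) 1, u ∈ s ↔ u ∈ s') :
    lam01 s = lam01 s' := by
  rw [lam01, Measure.restrict_apply' measurableSet_Ioo, Measure.restrict_apply' measurableSet_Ioo]
  congr 1
  ext u
  exact and_congr_left (h u)

lemma lam01_Ioc {a b : ℝ} (ha : 0 ≤ a) (hb : b ≤ 1) :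
    lam01 (Ioc a b) = ENNReal.ofReal (b - a) := by
  rw [lam01, Measure.restrict_congr_set Ioo_ae_eq_Icc, Measure.restrict_apply measurableSet_Ioc,
    inter_eq_left.mpr (Ioc_subset_Icc_self.trans (Icc_subset_Icc ha hb)), Real.volume_Ioc]

variable {η η' : Measure ℝ} [IsProbabilityMeasure η] [IsProbabilityMeasure η']

lemma lam01_qf_le (t : ℝ) : lam01 {u | qf η u ≤ t} = η (Iic t) := by
  rw [lam01_congr (s' := Ioc 0 (Fcdf η t)) fun u hu => ?_, lam01_Ioc le_rfl (Fcdf_le_one t),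
    sub_zero, ofReal_Fcdf]
  simp [qf_le_iff_le_Fcdf hu, hu.1]

lemma lam01_qf_le_lt_qf (t : ℝ) :
    lam01 {u | qf η u ≤ t ∧ t < qf η' u} = η (Iic t) - η' (Iic t) := by
  rw [lam01_congr (s' := Ioc (Fcdf η' t) (Fcdf η t)) fun u hu => ?_,
    lam01_Ioc (Fcdf_nonneg t) (Fcdf_le_one t), ENNReal.ofReal_sub _ (Fcdf_nonneg t),
    ofReal_Fcdf, ofReal_Fcdf]
  simp [qf_le_iff_le_Fcdf hu, ← not_le, and_comm]

lemma aemeasurable_qf : AEMeasurable (qf η) lam01 :=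
  aemeasurable_restrict_of_monotoneOn measurableSet_Ioo monotoneOn_qf

lemma map_qf_lam01 : lam01.map (qf η) = η :=
  Measure.ext_of_Iic _ _ fun t => by
    rw [Measure.map_apply_of_aemeasurable aemeasurable_qf measurableSet_Iic]
    exact lam01_qf_le t

lemma integrable_qf (hη : Integrable (fun x => |x|) η) : Integrable (qf η) lam01 := by
  rw [← map_qf_lam01 (η := η)] at hη
  rw [← integrable_norm_iff aemeasurable_qf.aestronglyMeasurable]
  exact (integrable_map_measure hη.aestronglyMeasurable aemeasurable_qf).1 hη

lemma integral_qf : ∫ u, qf η u ∂lam01 = ∫ x, x ∂η := by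
  conv_rhs => rw [← map_qf_lam01 (η := η)]
  exact (integral_map aemeasurable_qf aestronglyMeasurable_id).symm

lemma stochOrder_iff_ae_le : StochOrder η η' ↔ ∀ᵐ u ∂lam01, qf η u ≤ qf η' u := by
  refine ⟨ae_restrict_of_forall_mem measurableSet_Ioo, fun h u hu => ?_⟩
  by_contra! hlt
  -- with `s = qf η' u`, every `v ∈ (Fcdf η s, u]` has `qf η' v ≤ s < qf η v`
  set s := qf η' u
  have hgap : Fcdf η s < u := lt_of_not_ge fun h' => hlt.not_ge ((qf_le_iff_le_Fcdf hu s).2 h')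
  have hbad : Ioc (Fcdf η s) u ⊆ {v | ¬ qf η v ≤ qf η' v} := fun v hv => by
    have hv01 : v ∈ Ioo (0 : ℝ) 1 := ⟨(Fcdf_nonneg s).trans_lt hv.1, hv.2.trans_lt hu.2⟩
    have h₁ : s < qf η v := lt_of_not_ge fun h' => hv.1.not_ge ((qf_le_iff_le_Fcdf hv01 s).1 h')
    have h₂ : qf η' v ≤ s := (qf_le_iff_le_Fcdf hv01 s).2 (hv.2.trans (le_Fcdf_qf hu))
    exact fun h₃ => (h₃.trans h₂).not_gt h₁
  have hnull := measure_mono_null hbad (ae_iff.1 h)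
  rw [lam01_Ioc (Fcdf_nonneg s) hu.2.le, ENNReal.ofReal_eq_zero] at hnull
  linarith

end UnitInterval

section Coupling

lemma measurableSet_le_and_lt {α : Type*} [MeasurableSpace α] {X Y : α → ℝ} (hX : Measurable X)
    (hY : Measurable Y) (t : ℝ) : MeasurableSet {a | X a ≤ t ∧ t < Y a} :=
  (measurableSet_le hX measurable_const).inter (measurableSet_lt measurable_const hY)

lemma lintegral_ofReal_abs_sub_eq (π : Measure (ℝ × ℝ)) [SFinite π] :
    ∫⁻ p, ENNReal.ofReal |p.1 - p.2| ∂π =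
      ∫⁻ t, (π {p | p.1 ≤ t ∧ t < p.2} + π {p | p.2 ≤ t ∧ t < p.1}) := by
  set S : Set ((ℝ × ℝ) × ℝ) := {z | z.1.1 ⊓ z.1.2 ≤ z.2 ∧ z.2 < z.1.1 ⊔ z.1.2}
  have hS : MeasurableSet S :=
    (measurableSet_le (measurable_fst.fst.min measurable_fst.snd) measurable_snd).inter
      (measurableSet_lt measurable_snd (measurable_fst.fst.max measurable_fst.snd))
  calc ∫⁻ p, ENNReal.ofReal |p.1 - p.2| ∂π = (π.prod volume) S := by
        rw [Measure.prod_apply hS]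
        refine lintegral_congr fun p => ?_
        rw [show Prod.mk p ⁻¹' S = Ico (p.1 ⊓ p.2) (p.1 ⊔ p.2) from rfl, Real.volume_Ico,
          max_sub_min_eq_abs, abs_sub_comm]
    _ = _ := by
        rw [Measure.prod_apply_symm hS]
        refine lintegral_congr fun t => ?_
        have hdisj : Disjoint {p : ℝ × ℝ | p.1 ≤ t ∧ t < p.2} {p | p.2 ≤ t ∧ t < p.1} :=
          disjoint_left.2 fun p h₁ h₂ => lt_irrefl _ (h₁.1.trans_lt h₂.2)
        rw [← measure_union hdisj (measurableSet_le_and_lt measurable_snd measurable_fst t)]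
        congr 1
        ext p
        simp only [S, mem_preimage, mem_ofPred_eq, mem_union, inf_le_iff, lt_sup_iff]
        grind

lemma measure_le_tsub_measure_le_le {α : Type*} [MeasurableSpace α] (μ : Measure α)
    (X Y : α → ℝ) (t : ℝ) :
    μ {a | X a ≤ t} - μ {a | Y a ≤ t} ≤ μ {a | X a ≤ t ∧ t < Y a} := by
  rw [tsub_le_iff_right]
  calc μ {a | X a ≤ t} ≤ μ ({a | X a ≤ t ∧ t < Y a} ∪ {a | Y a ≤ t}) :=
        measure_mono fun a ha => (lt_or_ge t (Y a)).imp (⟨ha, ·⟩) id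
    _ ≤ _ := measure_union_le _ _

variable {η η' : Measure ℝ} {π : Measure (ℝ × ℝ)}

lemma IsCoupling.measure_fst_le_eq (hπ : IsCoupling π η η') (t : ℝ) :
    π {p | p.1 ≤ t} = η (Iic t) := by
  rw [← hπ.1, Measure.map_apply measurable_fst measurableSet_Iic]
  rfl

lemma IsCoupling.measure_snd_le_eq (hπ : IsCoupling π η η') (t : ℝ) :
    π {p | p.2 ≤ t} = η' (Iic t) := by
  rw [← hπ.2, Measure.map_apply measurable_snd measurableSet_Iic]
  rfl

lemma IsCoupling.isProbabilityMeasure [IsProbabilityMeasure η] (hπ : IsCoupling π η η') :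
    IsProbabilityMeasure π :=
  ⟨by rw [← preimage_univ (f := Prod.fst), ← Measure.map_apply measurable_fst .univ, hπ.1,
    measure_univ]⟩

lemma IsCoupling.integrable_abs_sub (hπ : IsCoupling π η η') (hη : Integrable (fun x => |x|) η)
    (hη' : Integrable (fun x => |x|) η') : Integrable (fun p : ℝ × ℝ => |p.1 - p.2|) π := by
  rw [← hπ.1] at hη
  rw [← hπ.2] at hη'
  refine ((integrable_map_measure hη.aestronglyMeasurable measurable_fst.aemeasurable).1 hη).add
    ((integrable_map_measure hη'.aestronglyMeasurable measurable_snd.aemeasurable).1 hη')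
    |>.mono' (by fun_prop) (ae_of_all _ fun p => ?_)
  rw [Real.norm_eq_abs, abs_abs]
  exact abs_sub p.1 p.2

lemma IsCoupling.lintegral_ofReal_abs_sub_ge [IsProbabilityMeasure η]
    (hπ : IsCoupling π η η') :
    ∫⁻ t, ((η (Iic t) - η' (Iic t)) + (η' (Iic t) - η (Iic t))) ≤
      ∫⁻ p, ENNReal.ofReal |p.1 - p.2| ∂π := by
  have := hπ.isProbabilityMeasure
  rw [lintegral_ofReal_abs_sub_eq]
  refine lintegral_mono fun t => add_le_add ?_ ?_ <;>
  · rw [← hπ.measure_fst_le_eq, ← hπ.measure_snd_le_eq]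
    exact measure_le_tsub_measure_le_le π _ _ t

end Coupling

section QuantileCoupling

variable {η η' : Measure ℝ} [IsProbabilityMeasure η] [IsProbabilityMeasure η']

noncomputable def quantileCoupling (η η' : Measure ℝ) : Measure (ℝ × ℝ) :=
  lam01.map fun u => (qf η u, qf η' u)

lemma aemeasurable_qf_prod : AEMeasurable (fun u => (qf η u, qf η' u)) lam01 :=
  aemeasurable_qf.prodMk aemeasurable_qf

lemma isCoupling_quantileCoupling : IsCoupling (quantileCoupling η η') η η' := by
  constructor <;>
  rw [quantileCoupling, AEMeasurable.map_map_of_aemeasurable (by fun_prop) aemeasurable_qf_prod]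
  exacts [map_qf_lam01, map_qf_lam01]

instance : IsProbabilityMeasure (quantileCoupling η η') :=
  isCoupling_quantileCoupling.isProbabilityMeasure

lemma lintegral_ofReal_abs_sub_quantileCoupling :
    ∫⁻ p, ENNReal.ofReal |p.1 - p.2| ∂quantileCoupling η η' =
      ∫⁻ t, ((η (Iic t) - η' (Iic t)) + (η' (Iic t) - η (Iic t))) := by
  rw [lintegral_ofReal_abs_sub_eq]
  refine lintegral_congr fun t => ?_
  rw [quantileCoupling,
    Measure.map_apply_of_aemeasurable aemeasurable_qf_prod
      (measurableSet_le_and_lt measurable_fst measurable_snd t),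
    Measure.map_apply_of_aemeasurable aemeasurable_qf_prod
      (measurableSet_le_and_lt measurable_snd measurable_fst t)]
  exact congrArg₂ (· + ·) (lam01_qf_le_lt_qf t) (lam01_qf_le_lt_qf t)

lemma integral_abs_sub_quantileCoupling :
    ∫ p, |p.1 - p.2| ∂quantileCoupling η η' = ∫ u in Ioo (0 : ℝ) 1, |qf η u - qf η' u| :=
  integral_map aemeasurable_qf_prod (by fun_prop)

lemma Wr_one_eq_integral_quantileCoupling (hη : Integrable (fun x => |x|) η)
    (hη' : Integrable (fun x => |x|) η') :
    Wr 1 η η' = ∫ p, |p.1 - p.2| ∂quantileCoupling η η' := by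
  simp only [Wr, Real.rpow_one]
  refine IsLeast.csInf_eq ⟨⟨_, isCoupling_quantileCoupling, rfl⟩, ?_⟩
  rintro _ ⟨π, hπ, rfl⟩
  have := hπ.isProbabilityMeasure
  rw [← ENNReal.ofReal_le_ofReal_iff (integral_nonneg fun _ => abs_nonneg _),
    ofReal_integral_eq_lintegral_ofReal
      (isCoupling_quantileCoupling.integrable_abs_sub hη hη') (ae_of_all _ fun _ => abs_nonneg _),
    ofReal_integral_eq_lintegral_ofReal (hπ.integrable_abs_sub hη hη')
      (ae_of_all _ fun _ => abs_nonneg _),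
    lintegral_ofReal_abs_sub_quantileCoupling]
  exact hπ.lintegral_ofReal_abs_sub_ge

end QuantileCoupling

lemma integral_abs_eq_abs_integral_iff {α : Type*} [MeasurableSpace α] {μ : Measure α}
    {f : α → ℝ} (hf : Integrable f μ) :
    ∫ a, |f a| ∂μ = |∫ a, f a ∂μ| ↔ (∀ᵐ a ∂μ, 0 ≤ f a) ∨ ∀ᵐ a ∂μ, f a ≤ 0 := by
  constructor
  · intro h
    rcases le_or_gt 0 (∫ a, f a ∂μ) with hpos | hneg
    · rw [abs_of_nonneg hpos, eq_comm,
        integral_eq_iff_of_ae_le hf hf.abs (ae_of_all _ fun a => le_abs_self (f a))] at h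
      exact Or.inl (h.mono fun a ha => ha ▸ abs_nonneg (f a))
    · rw [abs_of_neg hneg, ← integral_neg, eq_comm,
        integral_eq_iff_of_ae_le hf.fun_neg hf.abs (ae_of_all _ fun a => neg_le_abs (f a))] at h
      exact Or.inr (h.mono fun a ha => by linarith [abs_nonneg (f a), show -f a = |f a| from ha])
  · rintro (h | h)
    · rw [abs_of_nonneg (integral_nonneg_of_ae h)]
      exact integral_congr_ae (h.mono fun a ha => abs_of_nonneg ha)
    · rw [abs_of_nonpos (integral_nonpos_of_ae h), ← integral_neg]
      exact integral_congr_ae (h.mono fun a ha => abs_of_nonpos ha)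

/-- `W₁(η,η') = ∫_{(0,1)} |F_η^{-1}(u) - F_{η'}^{-1}(u)| du`, this quantity is
at least `|∫ x η(dx) - ∫ x η'(dx)|`, and equality holds iff `η` and `η'` are comparable in the
stochastic order. -/
theorem stmt1
    (η η' : Measure ℝ) [IsProbabilityMeasure η] [IsProbabilityMeasure η']
    (hη1 : Integrable (fun x => |x|) η) (hη'1 : Integrable (fun x => |x|) η') :
    Wr 1 η η' = (∫ u in Set.Ioo (0 : ℝ) 1, |qf η u - qf η' u|) ∧
    |(∫ x, x ∂η) - ∫ x, x ∂η'| ≤ ∫ u in Set.Ioo (0 : ℝ) 1, |qf η u - qf η' u| ∧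
    ((∫ u in Set.Ioo (0 : ℝ) 1, |qf η u - qf η' u|) = |(∫ x, x ∂η) - ∫ x, x ∂η'| ↔
      (StochOrder η η' ∨ StochOrder η' η)) := by
  have hint : Integrable (fun u => qf η u - qf η' u) lam01 :=
    (integrable_qf hη1).sub (integrable_qf hη'1)
  have hmean : (∫ x, x ∂η) - ∫ x, x ∂η' = ∫ u in Ioo (0 : ℝ) 1, (qf η u - qf η' u) := by
    rw [← integral_qf, ← integral_qf, ← integral_sub (integrable_qf hη1) (integrable_qf hη'1)]
    rfl
  refine ⟨(Wr_one_eq_integral_quantileCoupling hη1 hη'1).trans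
    integral_abs_sub_quantileCoupling, hmean ▸ abs_integral_le_integral_abs, ?_⟩
  rw [hmean, integral_abs_eq_abs_integral_iff (μ := volume.restrict (Ioo 0 1)) hint,
    stochOrder_iff_ae_le, stochOrder_iff_ae_le]
  simp only [sub_nonneg, sub_nonpos]
  exact or_comm
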